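/- arXiv:cond-mat/0302480 — 3 statements merged into one kernel-verified Lean document; each statement's English description precedes it below -/
import Mathlib

section
/- Let φ_{ij} = φ_{ij}(+,-) := J_γ(i-j) and define for a spin configuration σ ∈ {±1}^{ℤ^d}, V_σ(i;#) = ∑_{j≠i} φ_{ij}(#, σ_j) where φ_{ij}(σ_i,σ_j) = -(1/2) J_γ(i-j)(σ_i σ_j - 1), and J_γ is the Kac step potential with range R = γ^{-1}. Then there exists a constant c₂ > 0, independent of γ, such that for all x, y ∈ ℤ^d with d(x,y) ≤ R and both choices of # ∈ {+,-}: |V_σ(x;#) − V_σ(y;#)| ≤ c₂ · d(x,y)/R. -/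
/-- Sup-norm distance on `ℤ^d`. -/
def supDist {d : ℕ} (x y : Fin d → ℤ) : ℕ :=
  Finset.univ.sup fun i => (x i - y i).natAbs

open scoped Classical in
/-- The step function `J(x) = 2^{-d} 1_{‖x‖∞ ≤ 1}` on `ℝ^d`. -/
noncomputable def Jstep (d : ℕ) (x : Fin d → ℝ) : ℝ :=
  if ∀ i, |x i| ≤ 1 then (2 : ℝ)⁻¹ ^ d else 0

/-- The Kac potential `J_γ(x) = c_γ γ^d J(γ x)` on `ℤ^d`. -/
noncomputable def Jkac (d : ℕ) (cγ γ : ℝ) (x : Fin d → ℤ) : ℝ :=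
  cγ * γ ^ d * Jstep d (fun i => γ * (x i : ℝ))

/-- `φ_{ij}(a,b) = -(1/2) J_γ(i-j)(ab - 1)`. -/
noncomputable def phiK (d : ℕ) (cγ γ : ℝ) (i j : Fin d → ℤ) (a b : ℝ) : ℝ :=
  -(1 / 2) * Jkac d cγ γ (i - j) * (a * b - 1)

/-- `V_σ(i;s) = ∑_{j ≠ i} φ_{ij}(s, σ_j)`. -/
noncomputable def Vkac (d : ℕ) (cγ γ : ℝ) (σ : (Fin d → ℤ) → ℝ)
    (i : Fin d → ℤ) (s : ℝ) : ℝ :=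
  ∑' j : {j : Fin d → ℤ // j ≠ i}, phiK d cγ γ i j.1 s (σ j.1)

/-- A tsum over `j ≠ x` of a function vanishing outside a finset `S`
equals the finite sum over `S.erase x`. -/
lemma tsum_ne_eq_sum_erase {d : ℕ} (f : (Fin d → ℤ) → ℝ) (x : Fin d → ℤ)
    (S : Finset (Fin d → ℤ)) (h0 : ∀ j ∉ S, f j = 0) :
    ∑' j : {j : Fin d → ℤ // j ≠ x}, f j.1 = ∑ j ∈ S.erase x, f j := by
  have h1 : ∑' j : {j : Fin d → ℤ // j ≠ x}, f j.1
      = ∑' j : ({j | j ≠ x} : Set (Fin d → ℤ)), f j.1 := rfl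
  rw [h1, tsum_subtype]
  have hzero : ∀ b ∉ S, ({j | j ≠ x} : Set (Fin d → ℤ)).indicator f b = 0 := by
    intro b hb
    by_cases hbx : b = x <;> simp [Set.indicator_apply, hbx, h0 b hb]
  rw [tsum_eq_sum (s := S) hzero]
  rw [← Finset.sum_erase S (a := x) (f := ({j | j ≠ x} : Set (Fin d → ℤ)).indicator f)
    (by simp [Set.indicator_apply])]
  refine Finset.sum_congr rfl fun j hj => ?_
  have hjx : j ≠ x := Finset.ne_of_mem_erase hj
  simp [Set.indicator_apply, hjx]

/-- `a^(n+1) - b^(n+1) ≤ (n+1)(a-b)a^n` for `0 ≤ b ≤ a`. -/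
lemma pow_sub_pow_le_kac (a b : ℝ) (hb : 0 ≤ b) (hab : b ≤ a) :
    ∀ n : ℕ, a ^ (n + 1) - b ^ (n + 1) ≤ (n + 1 : ℝ) * (a - b) * a ^ n := by
  intro n
  have ha : 0 ≤ a := hb.trans hab
  induction n with
  | zero => simp
  | succ n ih =>
    have h3 : b ^ (n + 1) ≤ a ^ (n + 1) := pow_le_pow_left₀ hb hab _
    have h2 : a * (a ^ (n+1) - b ^ (n+1)) ≤ a * ((n + 1 : ℝ) * (a - b) * a ^ n) :=
      mul_le_mul_of_nonneg_left ih ha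
    have hsub : 0 ≤ a - b := sub_nonneg.mpr hab
    calc a ^ (n + 2) - b ^ (n + 2)
        = a * (a ^ (n+1) - b ^ (n+1)) + (a - b) * b ^ (n+1) := by ring
      _ ≤ a * ((n + 1 : ℝ) * (a - b) * a ^ n) + (a - b) * a ^ (n+1) := by
          exact add_le_add h2 (mul_le_mul_of_nonneg_left h3 hsub)
      _ = ((n:ℝ) + 1 + 1) * (a - b) * a ^ (n+1) := by ring
      _ = ((n + 1 : ℕ) + 1 : ℝ) * (a - b) * a ^ (n+1) := by push_cast; ring

set_option maxHeartbeats 2000000 in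
/-- Continuity of the Kac step potential: there is a constant `c₂ > 0`,
independent of `γ`, such that for every `γ ∈ (0,1)`, every normalizing `c_γ`,
every spin configuration `σ`, every `s = ±1` and all `x, y` with
`d(x,y) ≤ R = γ⁻¹`: `|V_σ(x;s) − V_σ(y;s)| ≤ c₂ · d(x,y)/R`. -/
theorem stmt_4 (d : ℕ) (hd : 1 ≤ d) :
    ∃ c₂ : ℝ, 0 < c₂ ∧ ∀ γ ∈ Set.Ioo (0 : ℝ) 1, ∀ cγ : ℝ,
      (∑' x : {x : Fin d → ℤ // x ≠ 0}, Jkac d cγ γ x.1 = 1) →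
      ∀ σ : (Fin d → ℤ) → ℝ, (∀ j, σ j = 1 ∨ σ j = -1) →
      ∀ s : ℝ, (s = 1 ∨ s = -1) →
      ∀ x y : Fin d → ℤ, (supDist x y : ℝ) ≤ γ⁻¹ →
      |Vkac d cγ γ σ x s - Vkac d cγ γ σ y s| ≤ c₂ * ((supDist x y : ℝ) * γ) := by
  classical
  refine ⟨3 * d + 3, by positivity, ?_⟩
  rintro γ ⟨hγ0, hγ1⟩ cγ hnorm σ hσ s hs x y hdist
  rcases eq_or_ne x y with rfl | hxy
  · have h0 : supDist x x = 0 :=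
      Nat.le_zero.mp (Finset.sup_le fun i _ => by simp)
    simp [h0]
  -- basic quantities
  set K : ℕ := ⌊γ⁻¹⌋₊ with hKdef
  have hγinv0 : (0:ℝ) < γ⁻¹ := inv_pos.mpr hγ0
  have hγinv1 : (1:ℝ) < γ⁻¹ := by
    nlinarith [mul_pos hγinv0 (show (0:ℝ) < 1 - γ by linarith),
      mul_inv_cancel₀ (ne_of_gt hγ0)]
  have hK1 : 1 ≤ K := Nat.le_floor (by exact_mod_cast hγinv1.le)
  set a : ℝ := cγ * γ ^ d * (2:ℝ)⁻¹ ^ d with hadef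
  -- value of Jkac
  have hJ : ∀ z : Fin d → ℤ, Jkac d cγ γ z
      = if (∀ i, (z i).natAbs ≤ K) then a else 0 := by
    intro z
    have hcond : ∀ i : Fin d, (|γ * ((z i : ℤ) : ℝ)| ≤ 1) ↔ (z i).natAbs ≤ K := by
      intro i
      rw [abs_mul, abs_of_pos hγ0, hKdef,
        Nat.le_floor_iff (le_of_lt hγinv0), Nat.cast_natAbs,
        show (γ * |((z i : ℤ) : ℝ)| ≤ 1) ↔ (|((z i : ℤ):ℝ)| ≤ γ⁻¹) from by
          rw [inv_eq_one_div, le_div_iff₀ hγ0, mul_comm], Int.cast_abs]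
    unfold Jkac Jstep
    by_cases h : ∀ i, (z i).natAbs ≤ K
    · rw [if_pos (fun i => (hcond i).mpr (h i)), if_pos h]
    · rw [if_neg (fun hh => h (fun i => (hcond i).mp (hh i))), if_neg h, mul_zero]
  -- boxes
  set B : (Fin d → ℤ) → Finset (Fin d → ℤ) :=
    fun z => Finset.Icc (fun i => z i - (K:ℤ)) (fun i => z i + (K:ℤ)) with hBdef
  have hBmem : ∀ z j : Fin d → ℤ, j ∈ B z ↔ ∀ i, (z i - j i).natAbs ≤ K := by
    intro z j
    rw [hBdef]
    simp only [Finset.mem_Icc, Pi.le_def]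
    constructor
    · rintro ⟨h1, h2⟩ i
      have := h1 i; have := h2 i; omega
    · intro h
      exact ⟨fun i => by have := h i; omega, fun i => by have := h i; omega⟩
  have hBcard : ∀ z : Fin d → ℤ, (B z).card = (2*K+1)^d := by
    intro z
    rw [hBdef]
    rw [Pi.card_Icc]
    have h1 : ∀ i : Fin d, (Finset.Icc (z i - (K:ℤ)) (z i + (K:ℤ))).card = 2*K+1 := by
      intro i; rw [Int.card_Icc]; omega
    simp [h1, Finset.prod_const]
  have hP3 : 3 ≤ (2*K+1)^d := by
    calc 3 = 3^1 := by norm_num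
    _ ≤ (2*K+1)^1 := by simpa using by omega
    _ ≤ (2*K+1)^d := Nat.pow_le_pow_right (by omega) hd
  -- normalization gives a * N = 1
  set N : ℕ := (2*K+1)^d - 1 with hNdef
  have hsum0 : ∑' j : {j : Fin d → ℤ // j ≠ 0}, Jkac d cγ γ j.1 = a * N := by
    rw [tsum_ne_eq_sum_erase (Jkac d cγ γ) 0 (B 0) (fun j hj => by
      rw [hJ]
      refine if_neg (fun hh => hj ((hBmem 0 j).mpr (fun i => ?_)))
      have := hh i
      simp only [Pi.zero_apply]
      omega)]
    have hall : ∀ j ∈ (B 0).erase 0, Jkac d cγ γ j = a := by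
      intro j hj
      have hjB := (hBmem 0 j).mp (Finset.mem_of_mem_erase hj)
      rw [hJ]
      refine if_pos (fun i => ?_)
      have := hjB i
      simp only [Pi.zero_apply] at this
      omega
    rw [Finset.sum_congr rfl hall, Finset.sum_const,
      Finset.card_erase_of_mem ((hBmem 0 0).mpr (fun i => by simp)), hBcard,
      ← hNdef, nsmul_eq_mul, mul_comm]
  have haN : a * N = 1 := by rw [← hsum0]; exact hnorm
  have hNreal : (N:ℝ) = ((2*K+1:ℕ):ℝ)^d - 1 := by
    rw [hNdef]
    push_cast [Nat.cast_sub (by omega : 1 ≤ (2*K+1)^d)]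
    ring
  set A : ℝ := ((2*K+1:ℕ):ℝ) with hAdef
  have hA0 : (0:ℝ) < A := by rw [hAdef]; positivity
  have hA3 : (3:ℝ) ≤ A^d := by
    rw [hAdef]; exact_mod_cast hP3
  have hapos : 0 < a := by
    have hN0 : (0:ℝ) < (N:ℝ) := by rw [hNreal]; linarith
    nlinarith
  have haP : a * A^d ≤ 3/2 := by
    have h1 : a * (A^d - 1) = 1 := by rw [← hNreal]; exact haN
    nlinarith
  -- distance facts
  set m : ℕ := supDist x y with hmdef
  have hm_all : ∀ i, (x i - y i).natAbs ≤ m :=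
    fun i => Finset.le_sup (f := fun i => (x i - y i).natAbs) (Finset.mem_univ i)
  have hm1 : 1 ≤ m := by
    by_contra h
    push_neg at h
    interval_cases m
    · exact hxy (funext fun i => by have := hm_all i; omega)
  have hmK : m ≤ K := Nat.le_floor hdist
  -- intersection of boxes
  set P : Finset (Fin d → ℤ) :=
    Finset.Icc (fun i => max (x i) (y i) - (K:ℤ)) (fun i => min (x i) (y i) + (K:ℤ)) with hPdef
  have hPsubx : P ⊆ B x ∩ B y := by
    intro j hj
    rw [hPdef, Finset.mem_Icc] at hj
    obtain ⟨h1, h2⟩ := hj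
    rw [Finset.mem_inter, hBmem, hBmem]
    constructor
    · intro i
      have a1 := h1 i; have a2 := h2 i
      simp only at a1 a2
      have b1 : x i ≤ max (x i) (y i) := le_max_left _ _
      have b2 : min (x i) (y i) ≤ x i := min_le_left _ _
      omega
    · intro i
      have a1 := h1 i; have a2 := h2 i
      simp only at a1 a2
      have b1 : y i ≤ max (x i) (y i) := le_max_right _ _
      have b2 : min (x i) (y i) ≤ y i := min_le_right _ _
      omega
  have hPcard : (2*K+1-m)^d ≤ P.card := by
    rw [hPdef, Pi.card_Icc]
    have h1 : ∀ i : Fin d, 2*K+1-m ≤ (Finset.Icc (max (x i) (y i) - (K:ℤ)) (min (x i) (y i) + (K:ℤ))).card := by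
      intro i
      rw [Int.card_Icc]
      have := hm_all i
      rcases le_total (x i) (y i) with h | h
      · rw [max_eq_right h, min_eq_left h]; omega
      · rw [max_eq_left h, min_eq_right h]; omega
    calc (2*K+1-m)^d = ∏ _i : Fin d, (2*K+1-m) := by
          simp [Finset.prod_const]
      _ ≤ _ := Finset.prod_le_prod' (fun i _ => h1 i)
  have hIcard : (2*K+1-m)^d ≤ (B x ∩ B y).card :=
    le_trans hPcard (Finset.card_le_card hPsubx)
  -- symmetric difference bound
  set D : ℕ := (2*K+1)^d - (2*K+1-m)^d with hDdef
  have hsdgen : ∀ u v : Fin d → ℤ,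
      (2*K+1-m)^d ≤ (B u ∩ B v).card → (B u \ B v).card ≤ D := by
    intro u v h2
    have h1 : (B u \ B v).card = (B u).card - (B u ∩ B v).card := by
      rw [← Finset.sdiff_inter_self_left]
      exact Finset.card_sdiff_of_subset Finset.inter_subset_left
    have h3 : (B u ∩ B v).card ≤ (B u).card :=
      Finset.card_le_card Finset.inter_subset_left
    rw [h1, hBcard, hDdef]
    have h4 := hBcard u
    omega
  have hsd1 : (B x \ B y).card ≤ D := hsdgen x y hIcard
  have hsd2 : (B y \ B x).card ≤ D := hsdgen y x (by rwa [Finset.inter_comm])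
  -- spin weights
  set c : (Fin d → ℤ) → ℝ := fun j => -(1/2) * (s * σ j - 1) with hcdef
  have hc0 : ∀ j, 0 ≤ c j := by
    intro j
    rcases hs with rfl | rfl <;> rcases hσ j with h | h <;>
      simp only [hcdef, h] <;> norm_num
  have hc1 : ∀ j, c j ≤ 1 := by
    intro j
    rcases hs with rfl | rfl <;> rcases hσ j with h | h <;>
      simp only [hcdef, h] <;> norm_num
  -- V formula
  have hV : ∀ z : Fin d → ℤ, Vkac d cγ γ σ z s
      = a * ∑ j ∈ (B z).erase z, c j := by
    intro z
    unfold Vkac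
    rw [tsum_ne_eq_sum_erase (fun j => phiK d cγ γ z j s (σ j)) z (B z) (fun j hj => by
      show phiK d cγ γ z j s (σ j) = 0
      unfold phiK
      rw [hJ]
      rw [if_neg (fun hh => hj ((hBmem z j).mpr (fun i => by
        have := hh i
        simp only [Pi.sub_apply] at this
        omega)))]
      ring)]
    rw [Finset.mul_sum]
    refine Finset.sum_congr rfl fun j hj => ?_
    have hjB := (hBmem z j).mp (Finset.mem_of_mem_erase hj)
    show phiK d cγ γ z j s (σ j) = a * c j
    unfold phiK
    rw [hJ, if_pos (fun i => by have := hjB i; simp only [Pi.sub_apply]; omega), hcdef]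
    ring
  -- erase sets and card bounds
  set Ax := (B x).erase x with hAxdef
  set Ay := (B y).erase y with hAydef
  have hsub1 : Ax \ Ay ⊆ insert y (B x \ B y) := by
    intro j hj
    rw [Finset.mem_sdiff, hAxdef, hAydef, Finset.mem_erase] at hj
    obtain ⟨⟨hjx, hjBx⟩, hnot⟩ := hj
    rw [Finset.mem_insert]
    by_cases hjy : j = y
    · exact Or.inl hjy
    · exact Or.inr (Finset.mem_sdiff.mpr
        ⟨hjBx, fun hjBy => hnot (Finset.mem_erase.mpr ⟨hjy, hjBy⟩)⟩)
  have hsub2 : Ay \ Ax ⊆ insert x (B y \ B x) := by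
    intro j hj
    rw [Finset.mem_sdiff, hAxdef, hAydef, Finset.mem_erase] at hj
    obtain ⟨⟨hjy, hjBy⟩, hnot⟩ := hj
    rw [Finset.mem_insert]
    by_cases hjx : j = x
    · exact Or.inl hjx
    · exact Or.inr (Finset.mem_sdiff.mpr
        ⟨hjBy, fun hjBx => hnot (Finset.mem_erase.mpr ⟨hjx, hjBx⟩)⟩)
  have hcard1 : (Ax \ Ay).card ≤ D + 1 := by
    calc (Ax \ Ay).card ≤ (insert y (B x \ B y)).card := Finset.card_le_card hsub1
    _ ≤ (B x \ B y).card + 1 := Finset.card_insert_le _ _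
    _ ≤ D + 1 := by omega
  have hcard2 : (Ay \ Ax).card ≤ D + 1 := by
    calc (Ay \ Ax).card ≤ (insert x (B y \ B x)).card := Finset.card_le_card hsub2
    _ ≤ (B y \ B x).card + 1 := Finset.card_insert_le _ _
    _ ≤ D + 1 := by omega
  -- sum difference bound
  have hsum_le : ∀ T : Finset (Fin d → ℤ), ∑ j ∈ T, c j ≤ (T.card : ℝ) := by
    intro T
    calc ∑ j ∈ T, c j ≤ ∑ _j ∈ T, (1:ℝ) := Finset.sum_le_sum (fun j _ => hc1 j)
    _ = (T.card : ℝ) := by simp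
  have hsum_nonneg : ∀ T : Finset (Fin d → ℤ), (0:ℝ) ≤ ∑ j ∈ T, c j :=
    fun T => Finset.sum_nonneg (fun j _ => hc0 j)
  have hdiff : |∑ j ∈ Ax, c j - ∑ j ∈ Ay, c j| ≤ ((D:ℝ) + 1) + ((D:ℝ) + 1) := by
    have e1 : ∑ j ∈ Ax, c j = ∑ j ∈ Ax ∩ Ay, c j + ∑ j ∈ Ax \ Ay, c j :=
      (Finset.sum_inter_add_sum_sdiff _ _ _).symm
    have e2 : ∑ j ∈ Ay, c j = ∑ j ∈ Ax ∩ Ay, c j + ∑ j ∈ Ay \ Ax, c j := by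
      rw [Finset.inter_comm]
      exact (Finset.sum_inter_add_sum_sdiff _ _ _).symm
    have b1 : ∑ j ∈ Ax \ Ay, c j ≤ (D:ℝ) + 1 :=
      le_trans (hsum_le _) (by exact_mod_cast hcard1)
    have b2 : ∑ j ∈ Ay \ Ax, c j ≤ (D:ℝ) + 1 :=
      le_trans (hsum_le _) (by exact_mod_cast hcard2)
    have n1 := hsum_nonneg (Ax \ Ay)
    have n2 := hsum_nonneg (Ay \ Ax)
    have hD0 : (0:ℝ) ≤ (D:ℝ) := Nat.cast_nonneg _
    rw [abs_le]
    constructor <;> [linarith; linarith]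
  -- real bound on D
  have hm1' : (1:ℝ) ≤ (m:ℝ) := by exact_mod_cast hm1
  have hmK' : (m:ℝ) ≤ (K:ℝ) := by exact_mod_cast hmK
  have hK1' : (1:ℝ) ≤ (K:ℝ) := by exact_mod_cast hK1
  have hA1 : (1:ℝ) ≤ A := by rw [hAdef]; push_cast; linarith
  have hDreal : (D:ℝ) ≤ (d:ℝ) * (m:ℝ) * A^(d-1) := by
    obtain ⟨e, he⟩ : ∃ e, d = e + 1 := ⟨d - 1, by omega⟩
    have hle : (2*K+1-m)^d ≤ (2*K+1)^d := Nat.pow_le_pow_left (by omega) d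
    have hcast : (D:ℝ) = A^d - (A - (m:ℝ))^d := by
      rw [hDdef, Nat.cast_sub hle]
      have h1 : ((2*K+1:ℕ):ℝ) = A := by rw [hAdef]
      have h2 : (((2*K+1-m:ℕ)):ℝ) = A - (m:ℝ) := by
        rw [Nat.cast_sub (by omega : m ≤ 2*K+1), hAdef]
      push_cast at h1 h2 ⊢
      rw [h1, h2]
    have hb0 : (0:ℝ) ≤ A - (m:ℝ) := by rw [hAdef]; push_cast; linarith
    have hba : A - (m:ℝ) ≤ A := by linarith
    have hkey := pow_sub_pow_le_kac A (A - (m:ℝ)) hb0 hba e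
    have he1 : e = d - 1 := by omega
    have he2 : ((e:ℝ) + 1) = (d:ℝ) := by rw [he]; push_cast; ring
    rw [hcast]
    calc A ^ d - (A - (m:ℝ)) ^ d
        = A ^ (e+1) - (A - (m:ℝ)) ^ (e+1) := by rw [he]
    _ ≤ ((e:ℝ)+1) * (A - (A - (m:ℝ))) * A ^ e := hkey
    _ = ((e:ℝ)+1) * (m:ℝ) * A ^ e := by ring
    _ = (d:ℝ) * (m:ℝ) * A ^ (d-1) := by rw [he2, he1]
  -- analytic bounds
  have hAγ : 1 ≤ A * γ := by
    have h1 : γ⁻¹ < (K:ℝ) + 1 := Nat.lt_floor_add_one _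
    have h2 : (K:ℝ) + 1 ≤ A := by rw [hAdef]; push_cast; linarith
    have h3 : γ⁻¹ * γ = 1 := inv_mul_cancel₀ (ne_of_gt hγ0)
    nlinarith
  have hAe : A * A^(d-1) = A^d := by
    obtain ⟨e, he⟩ : ∃ e, d = e + 1 := ⟨d - 1, by omega⟩
    rw [he]
    simp [pow_succ]
    ring
  have key1 : a * A^(d-1) ≤ (3/2) * γ := by
    have h1 : a * A^(d-1) * A ≤ 3/2 := by
      calc a * A^(d-1) * A = a * A^d := by rw [← hAe]; ring
      _ ≤ 3/2 := haP
    have h2 : a * A^(d-1) ≤ (3/2)/A := by rw [le_div_iff₀ hA0]; exact h1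
    have h3 : (3/2)/A ≤ (3/2)*γ := by
      rw [div_le_iff₀ hA0]; nlinarith
    linarith
  have key2 : a ≤ (3/2) * γ := by
    have hpow1 : (1:ℝ) ≤ A^(d-1) := one_le_pow₀ hA1
    nlinarith
  -- finish
  rw [hV x, hV y, ← mul_sub, abs_mul, abs_of_pos hapos]
  calc a * |∑ j ∈ Ax, c j - ∑ j ∈ Ay, c j|
      ≤ a * (((D:ℝ) + 1) + ((D:ℝ) + 1)) := mul_le_mul_of_nonneg_left hdiff hapos.le
    _ = 2*(a*(D:ℝ)) + 2*a := by ring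
    _ ≤ 2*((d:ℝ)*(m:ℝ)*((3/2)*γ)) + 2*((3/2)*((m:ℝ)*γ)) := by
        have t1 : a * (D:ℝ) ≤ (d:ℝ) * (m:ℝ) * ((3/2)*γ) := by
          calc a * (D:ℝ) ≤ a * ((d:ℝ)*(m:ℝ)*A^(d-1)) :=
                mul_le_mul_of_nonneg_left hDreal hapos.le
          _ = (d:ℝ)*(m:ℝ)*(a*A^(d-1)) := by ring
          _ ≤ (d:ℝ)*(m:ℝ)*((3/2)*γ) :=
              mul_le_mul_of_nonneg_left key1 (by positivity)
        have t2 : a ≤ (3/2) * ((m:ℝ) * γ) := by nlinarith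
        linarith
    _ = (3*(d:ℝ)+3) * ((m:ℝ)*γ) := by ring
end

section
/- Let g : V' → ℂ be analytic on a domain containing a real interval, real-valued on the real axis, with g(h) → m* as h ↘ 0 for real h, and such that the right derivative limit lim_{h↘0} (g(h) − m*)/h = c exists with c ≠ 0. If there exists an analytic function h̃ on a neighborhood of m* with h̃(g(h)) = h for real h > 0 small and h̃(m*) = 0, then h̃'(m*) = 1/c ≠ 0, and by the biholomorphic mapping theorem h̃ has an analytic inverse near 0 which coincides with g on small positive reals; hence g extends analytically to a neighborhood of 0. -/
/-!
Composing `h̃ ∘ g = id` near `0⁺` with the slope of `h̃` at `m*` gives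
`h̃'(m*) · (g(h) - m*)/h → 1`, so `h̃'(m*) · c = 1`. In particular `h̃'(m*) ≠ 0`, so the inverse
function theorem provides a holomorphic local inverse of `h̃` near `h̃(m*) = 0`; since `g(h) → m*`,
that inverse agrees with `g` at small positive `h`.
-/

open Filter Topology

theorem HasDerivAt.mul_eq_one_of_tendsto_div {𝕜 α : Type*} [NontriviallyNormedField 𝕜]
    {u t : α → 𝕜} {φ : 𝕜 → 𝕜} {l : Filter α} [l.NeBot] {a d c : 𝕜}
    (hφ : HasDerivAt φ d a) (hu : Tendsto u l (𝓝 a)) (ht : ∀ᶠ x in l, t x ≠ 0)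
    (hφu : ∀ᶠ x in l, φ (u x) - φ a = t x)
    (hc : Tendsto (fun x => (u x - a) / t x) l (𝓝 c)) : d * c = 1 := by
  have hne : ∀ᶠ x in l, u x ≠ a := by
    filter_upwards [ht, hφu] with x htx hx hux
    rw [hux, sub_self] at hx
    exact htx hx.symm
  have hslope : Tendsto (fun x => t x / (u x - a)) l (𝓝 d) := by
    refine ((hasDerivAt_iff_tendsto_slope.mp hφ).comp
      (tendsto_nhdsWithin_iff.mpr ⟨hu, hne⟩)).congr' ?_
    filter_upwards [hφu] with x hx
    simp only [Function.comp, slope_def_field, hx]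
  refine tendsto_nhds_unique (hslope.mul hc) (tendsto_const_nhds.congr' ?_)
  filter_upwards [ht, hne] with x htx hux
  field_simp [sub_ne_zero.mpr hux]

theorem ContDiffAt.exists_eventually_leftInverse {𝕂 : Type*} [RCLike 𝕂] {f : 𝕂 → 𝕂} {a : 𝕂}
    (hf : ContDiffAt 𝕂 1 f a) (hd : deriv f a ≠ 0) :
    ∃ G : 𝕂 → 𝕂, (∀ᶠ w in 𝓝 (f a), DifferentiableAt 𝕂 G w) ∧ ∀ᶠ z in 𝓝 a, G (f z) = z := by
  have hf' := (hf.differentiableAt one_ne_zero).hasDerivAt.hasFDerivAt_equiv hd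
  refine ⟨hf.localInverse hf' one_ne_zero, ?_, ?_⟩
  · exact ((hf.to_localInverse hf' one_ne_zero).eventually (by simp)).mono
      fun w hw => hw.differentiableAt one_ne_zero
  · exact (hf.hasStrictFDerivAt' hf' one_ne_zero).eventually_left_inverse

theorem stmt_16_general (g : ℂ → ℂ)
    (mstar c : ℝ) (hc : c ≠ 0)
    (hlim : Filter.Tendsto (fun x : ℝ => g (x : ℂ))
      (nhdsWithin 0 (Set.Ioi 0)) (nhds (mstar : ℂ)))
    (hder : Filter.Tendsto (fun x : ℝ => (g (x : ℂ) - (mstar : ℂ)) / (x : ℂ))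
      (nhdsWithin 0 (Set.Ioi 0)) (nhds (c : ℂ)))
    (htld : ℂ → ℂ) (W : Set ℂ) (hW : IsOpen W) (hmW : (mstar : ℂ) ∈ W)
    (hht : DifferentiableOn ℂ htld W)
    (hinv : ∀ᶠ x : ℝ in nhdsWithin 0 (Set.Ioi 0), htld (g (x : ℂ)) = (x : ℂ))
    (h0 : htld (mstar : ℂ) = 0) :
    deriv htld (mstar : ℂ) = 1 / (c : ℂ) ∧
      ∃ G : ℂ → ℂ, ∃ V ∈ nhds (0 : ℂ), DifferentiableOn ℂ G V ∧
        ∀ᶠ x : ℝ in nhdsWithin 0 (Set.Ioi 0), G (x : ℂ) = g (x : ℂ) := by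
  have hanal : AnalyticAt ℂ htld mstar := hht.analyticAt (hW.mem_nhds hmW)
  have hx_ne : ∀ᶠ x : ℝ in 𝓝[>] 0, (x : ℂ) ≠ 0 :=
    eventually_nhdsWithin_of_forall fun x hx => Complex.ofReal_ne_zero.mpr (ne_of_gt hx)
  have hderiv : deriv htld mstar = 1 / c :=
    eq_one_div_of_mul_eq_one_left <| hanal.differentiableAt.hasDerivAt.mul_eq_one_of_tendsto_div
      (t := fun x : ℝ => (x : ℂ)) hlim hx_ne (by simpa [h0] using hinv) hder
  refine ⟨hderiv, ?_⟩
  obtain ⟨G, hGdiff, hGinv⟩ := hanal.contDiffAt.exists_eventually_leftInverse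
    (by simpa [hderiv] using hc)
  refine ⟨G, {w | DifferentiableAt ℂ G w}, by rwa [h0] at hGdiff,
    fun w hw => hw.differentiableWithinAt, ?_⟩
  filter_upwards [hinv, hlim.eventually hGinv] with x hx hGx
  rwa [hx] at hGx

/-- If `g` is analytic on a domain containing a real interval `(0, ε)`,
real-valued there, `g(h) → m*` as `h ↘ 0`, the right-derivative limit
`(g(h) − m*)/h → c ≠ 0` exists, and there is an analytic `h̃` near `m*` with
`h̃(g(h)) = h` for small real `h > 0` and `h̃(m*) = 0`, then `h̃'(m*) = 1/c ≠ 0`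
and (by the biholomorphic mapping theorem) `g` extends analytically to a
neighborhood of `0`. -/
theorem stmt_16 (g : ℂ → ℂ) (U : Set ℂ) (hU : IsOpen U) (ε : ℝ) (hε : 0 < ε)
    (hsub : ∀ x : ℝ, 0 < x → x < ε → (x : ℂ) ∈ U)
    (hg : DifferentiableOn ℂ g U)
    (hreal : ∀ x : ℝ, 0 < x → x < ε → (g (x : ℂ)).im = 0)
    (mstar c : ℝ) (hc : c ≠ 0)
    (hlim : Filter.Tendsto (fun x : ℝ => g (x : ℂ))
      (nhdsWithin 0 (Set.Ioi 0)) (nhds (mstar : ℂ)))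
    (hder : Filter.Tendsto (fun x : ℝ => (g (x : ℂ) - (mstar : ℂ)) / (x : ℂ))
      (nhdsWithin 0 (Set.Ioi 0)) (nhds (c : ℂ)))
    (htld : ℂ → ℂ) (W : Set ℂ) (hW : IsOpen W) (hmW : (mstar : ℂ) ∈ W)
    (hht : DifferentiableOn ℂ htld W)
    (hinv : ∀ᶠ x : ℝ in nhdsWithin 0 (Set.Ioi 0), htld (g (x : ℂ)) = (x : ℂ))
    (h0 : htld (mstar : ℂ) = 0) :
    deriv htld (mstar : ℂ) = 1 / (c : ℂ) ∧
      ∃ G : ℂ → ℂ, ∃ V ∈ nhds (0 : ℂ), DifferentiableOn ℂ G V ∧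
        ∀ᶠ x : ℝ in nhdsWithin 0 (Set.Ioi 0), G (x : ℂ) = g (x : ℂ) :=
  stmt_16_general g mstar c hc hlim hder htld W hW hmW hht hinv h0
end

section
/- Suppose p : ℂ → ℂ restricted to the strip U₊ ∪ {Re h = 0} is the pointwise limit of analytic functions p_Λ whose k-th derivatives are bounded uniformly in Λ on U₊ = {0 < Re h < h₊}: sup_Λ ‖p_Λ^{(k)}‖_{U₊} ≤ M_k for every k. Then for real h' ≥ 0, the one-sided (right) derivatives p^{(k),←}(h') exist for all k and satisfy p^{(k),←}(h') = lim_{Λ} p_Λ^{(k)}(h') = lim_{h↘h'} p^{(k)}(h). -/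
/-!
Taylor's bound `‖f w - f z - (w - z) f' z‖ ≤ M (k + 2) ‖w - z‖²` for `f = p_Λ^{(k)}` on the convex
strip `{0 ≤ Re h < h₊}` (the bounds reach its edge by continuity) is uniform in `Λ`. So the
difference quotients of `p_Λ^{(k)}` approximate `p_Λ^{(k+1)}` uniformly in `Λ`, and by induction on
`k` every `p_Λ^{(k)}(z)` converges (swap of limits). Passing to the limit in Taylor's bound shows
that the limits `q k` satisfy `(q k)' = q (k + 1)` within the strip: on the open strip this
identifies `q k` with `p^{(k)}`, and at the edge it gives the right derivatives and, by continuity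
of `q k`, the right limits.
-/

open Filter Topology Set

theorem cauchySeq_of_forall_dist_le_cauchySeq {α β : Type*} [PseudoMetricSpace α] [Nonempty β]
    [SemilatticeSup β] {a : β → α}
    (h : ∀ ε > 0, ∃ b : β → α, CauchySeq b ∧ ∀ n, dist (a n) (b n) ≤ ε) : CauchySeq a := by
  refine Metric.cauchySeq_iff.2 fun ε hε => ?_
  obtain ⟨b, hb, hab⟩ := h (ε / 3) (by positivity)
  obtain ⟨N, hN⟩ := Metric.cauchySeq_iff.1 hb (ε / 3) (by positivity)
  refine ⟨N, fun m hm n hn => ?_⟩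
  have hbn := hab n
  rw [dist_comm] at hbn
  calc dist (a m) (a n) ≤ dist (a m) (b m) + dist (b m) (b n) + dist (b n) (a n) :=
        dist_triangle4 _ _ _ _
    _ < ε := by linarith [hab m, hN m hm n hn]

section Taylor

variable {𝕜 E : Type*} [RCLike 𝕜] [NormedAddCommGroup E] [NormedSpace 𝕜 E]
  {s : Set 𝕜} {f f' f'' : 𝕜 → E} {F' : E} {C : ℝ} {z w : 𝕜}

theorem Convex.norm_image_sub_sub_smul_le (hs : Convex ℝ s)
    (hf : ∀ u ∈ s, HasDerivWithinAt f (f' u) s u) (hf' : ∀ u ∈ s, HasDerivWithinAt f' (f'' u) s u)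
    (hC : ∀ u ∈ s, ‖f'' u‖ ≤ C) (hz : z ∈ s) (hw : w ∈ s) :
    ‖f w - f z - (w - z) • f' z‖ ≤ C * ‖w - z‖ ^ 2 := by
  set t := s ∩ Metric.closedBall z ‖w - z‖
  have ht : Convex ℝ t := hs.inter (convex_closedBall z _)
  have hzt : z ∈ t := ⟨hz, Metric.mem_closedBall_self (norm_nonneg _)⟩
  have hwt : w ∈ t := ⟨hw, by rw [Metric.mem_closedBall, dist_eq_norm]⟩
  have hderiv : ∀ u ∈ t, HasDerivWithinAt (fun u => f u - u • f' z) (f' u - f' z) t u := by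
    intro u hu
    simpa only [one_smul, id] using ((hf u hu.1).mono inter_subset_left).fun_sub
      ((hasDerivWithinAt_id u t).smul_const (f' z))
  have hbound : ∀ u ∈ t, ‖f' u - f' z‖ ≤ C * ‖w - z‖ := by
    intro u hu
    have hC0 : 0 ≤ C := (norm_nonneg _).trans (hC z hz)
    calc ‖f' u - f' z‖ ≤ C * ‖u - z‖ :=
          hs.norm_image_sub_le_of_norm_hasDerivWithin_le hf' hC hz hu.1
      _ ≤ C * ‖w - z‖ := by
          gcongr
          simpa [dist_eq_norm] using hu.2
  calc ‖f w - f z - (w - z) • f' z‖ = ‖(f w - w • f' z) - (f z - z • f' z)‖ := by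
        rw [sub_smul]; congr 1; abel
    _ ≤ C * ‖w - z‖ * ‖w - z‖ :=
        ht.norm_image_sub_le_of_norm_hasDerivWithin_le hderiv hbound hzt hwt
    _ = C * ‖w - z‖ ^ 2 := by ring

theorem norm_slope_sub_le_of_norm_sub_sub_smul_le (hne : w ≠ z)
    (h : ‖f w - f z - (w - z) • F'‖ ≤ C * ‖w - z‖ ^ 2) : ‖slope f z w - F'‖ ≤ C * ‖w - z‖ := by
  have hwz : 0 < ‖w - z‖ := norm_pos_iff.2 (sub_ne_zero.2 hne)
  have : slope f z w - F' = (w - z)⁻¹ • (f w - f z - (w - z) • F') := by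
    rw [slope_def_module, smul_sub _ (f w - f z), smul_smul, inv_mul_cancel₀ (sub_ne_zero.2 hne),
      one_smul]
  rw [this, norm_smul, norm_inv, inv_mul_le_iff₀ hwz]
  linarith

theorem hasDerivWithinAt_of_norm_sub_sub_smul_le
    (h : ∀ w ∈ s, ‖f w - f z - (w - z) • F'‖ ≤ C * ‖w - z‖ ^ 2) : HasDerivWithinAt f F' s z := by
  rw [hasDerivWithinAt_iff_isLittleO]
  refine Asymptotics.IsBigO.trans_isLittleO (g := fun w => ‖w - z‖ ^ 2) ?_
    ((Asymptotics.isLittleO_pow_sub_sub z one_lt_two).mono nhdsWithin_le_nhds)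
  refine Asymptotics.IsBigO.of_bound C (eventually_nhdsWithin_of_forall fun w hw => ?_)
  simpa using h w hw

end Taylor

section LimitOfDerivatives

variable {𝕜 E : Type*} [RCLike 𝕜] [NormedAddCommGroup E] [NormedSpace 𝕜 E]
  {s : Set 𝕜} {g : ℕ → ℕ → 𝕜 → E} {M : ℕ → ℝ}

theorem cauchySeq_succ_of_forall_tendsto (hs : Convex ℝ s)
    (hg : ∀ n k, ∀ z ∈ s, HasDerivWithinAt (g n k) (g n (k + 1) z) s z)
    (hM : ∀ n k, ∀ z ∈ s, ‖g n k z‖ ≤ M k) {k : ℕ} {z : 𝕜} (hz : z ∈ s) (hacc : AccPt z (𝓟 s))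
    (hk : ∀ w ∈ s, ∃ L, Tendsto (fun n => g n k w) atTop (𝓝 L)) :
    CauchySeq fun n => g n (k + 1) z := by
  refine cauchySeq_of_forall_dist_le_cauchySeq fun ε hε => ?_
  have hsmall : ∀ᶠ w in 𝓝 z, M (k + 2) * ‖w - z‖ ≤ ε := by
    have := (tendsto_norm_sub_self z).const_mul (M (k + 2))
    rw [mul_zero] at this
    exact this.eventually (eventually_le_nhds hε)
  obtain ⟨w, ⟨hwε, hw⟩, hwz⟩ := accPt_iff_nhds.1 hacc _ hsmall
  obtain ⟨Lw, hLw⟩ := hk w hw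
  obtain ⟨Lz, hLz⟩ := hk z hz
  refine ⟨fun n => slope (g n k) z w, ?_, fun n => ?_⟩
  · simp only [slope_def_module]
    exact ((hLw.sub hLz).const_smul _).cauchySeq
  · rw [dist_eq_norm, norm_sub_rev]
    exact (norm_slope_sub_le_of_norm_sub_sub_smul_le hwz
      (hs.norm_image_sub_sub_smul_le (hg n k) (hg n (k + 1)) (hM n (k + 2)) hz hw)).trans hwε

theorem hasDerivWithinAt_of_forall_tendsto (hs : Convex ℝ s)
    (hg : ∀ n k, ∀ z ∈ s, HasDerivWithinAt (g n k) (g n (k + 1) z) s z)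
    (hM : ∀ n k, ∀ z ∈ s, ‖g n k z‖ ≤ M k) {Q : ℕ → 𝕜 → E}
    (hQ : ∀ k, ∀ z ∈ s, Tendsto (fun n => g n k z) atTop (𝓝 (Q k z))) {k : ℕ} {z : 𝕜}
    (hz : z ∈ s) : HasDerivWithinAt (Q k) (Q (k + 1) z) s z := by
  refine hasDerivWithinAt_of_norm_sub_sub_smul_le (C := M (k + 2)) fun w hw => ?_
  refine le_of_tendsto (((hQ k w hw).sub (hQ k z hz)).sub
    ((hQ (k + 1) z hz).const_smul (w - z))).norm (Eventually.of_forall fun n => ?_)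
  exact hs.norm_image_sub_sub_smul_le (hg n k) (hg n (k + 1)) (hM n (k + 2)) hz hw

theorem exists_tendsto_hasDerivWithinAt_of_tendsto_zero [CompleteSpace E] (hs : Convex ℝ s)
    (hperf : Preperfect s) (hg : ∀ n k, ∀ z ∈ s, HasDerivWithinAt (g n k) (g n (k + 1) z) s z)
    (hM : ∀ n k, ∀ z ∈ s, ‖g n k z‖ ≤ M k)
    (h0 : ∀ z ∈ s, ∃ L, Tendsto (fun n => g n 0 z) atTop (𝓝 L)) :
    ∃ Q : ℕ → 𝕜 → E, (∀ k, ∀ z ∈ s, Tendsto (fun n => g n k z) atTop (𝓝 (Q k z))) ∧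
      ∀ k, ∀ z ∈ s, HasDerivWithinAt (Q k) (Q (k + 1) z) s z := by
  have hlim : ∀ k, ∀ z ∈ s, ∃ L, Tendsto (fun n => g n k z) atTop (𝓝 L) := by
    intro k
    induction k with
    | zero => exact h0
    | succ k ih =>
      exact fun z hz => cauchySeq_tendsto_of_complete
        (cauchySeq_succ_of_forall_tendsto hs hg hM hz (hperf z hz) ih)
  have hQ : ∀ k, ∀ z ∈ s, Tendsto (fun n => g n k z) atTop (𝓝 (limUnder atTop fun n => g n k z)) :=
    fun k z hz => tendsto_nhds_limUnder (hlim k z hz)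
  exact ⟨_, hQ, fun k z hz => hasDerivWithinAt_of_forall_tendsto hs hg hM hQ hz⟩

end LimitOfDerivatives

theorem Set.EqOn.iteratedDeriv_of_hasDerivAt {𝕜 E : Type*} [NontriviallyNormedField 𝕜]
    [NormedAddCommGroup E] [NormedSpace 𝕜 E] {f : 𝕜 → E} {F : ℕ → 𝕜 → E} {U : Set 𝕜}
    (hU : IsOpen U) (h0 : EqOn f (F 0) U) (hF : ∀ k, ∀ z ∈ U, HasDerivAt (F k) (F (k + 1) z) z)
    (k : ℕ) : EqOn (iteratedDeriv k f) (F k) U := by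
  induction k with
  | zero => simpa only [iteratedDeriv_zero] using h0
  | succ k ih =>
    intro z hz
    rw [iteratedDeriv_succ, (ih.eventuallyEq_of_mem (hU.mem_nhds hz)).deriv_eq]
    exact (hF k z hz).deriv

theorem AnalyticAt.hasDerivAt_iteratedDeriv {𝕜 E : Type*} [NontriviallyNormedField 𝕜]
    [NormedAddCommGroup E] [NormedSpace 𝕜 E] [CompleteSpace E] {f : 𝕜 → E} {z : 𝕜}
    (h : AnalyticAt 𝕜 f z) (k : ℕ) :
    HasDerivAt (iteratedDeriv k f) (iteratedDeriv (k + 1) f z) z := by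
  rw [iteratedDeriv_succ, iteratedDeriv_eq_iterate]
  exact (h.iterated_deriv k).differentiableAt.hasDerivAt

namespace Complex

theorem tendsto_add_ofReal_nhdsGT {a b : ℝ} {z : ℂ} (ha : a ≤ z.re) (hb : z.re < b) :
    Tendsto (fun t : ℝ => z + t) (𝓝[>] 0) (𝓝[re ⁻¹' Ioo a b \ {z}] z) := by
  refine tendsto_nhdsWithin_iff.2 ⟨?_, ?_⟩
  · have hcont : Continuous fun t : ℝ => z + t := continuous_const.add continuous_ofReal
    exact (hcont.tendsto' 0 z (by simp)).mono_left nhdsWithin_le_nhds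
  · filter_upwards [Ioo_mem_nhdsGT (sub_pos.2 hb)] with t ht
    simp only [Set.mem_sdiff, mem_preimage, add_re, ofReal_re, mem_Ioo, mem_singleton_iff,
      add_eq_left, ofReal_eq_zero]
    exact ⟨⟨by linarith [ht.1], by linarith [ht.2]⟩, ht.1.ne'⟩

theorem accPt_re_preimage_Ioo {a b : ℝ} {z : ℂ} (ha : a ≤ z.re) (hb : z.re < b) :
    AccPt z (𝓟 (re ⁻¹' Ioo a b)) :=
  accPt_principal_iff_nhdsWithin.2 (tendsto_add_ofReal_nhdsGT ha hb).neBot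

theorem tendsto_ofReal_nhdsGT {a b x : ℝ} (ha : a ≤ x) (hb : x < b) :
    Tendsto (fun y : ℝ => (y : ℂ)) (𝓝[>] x) (𝓝[re ⁻¹' Ioo a b \ {(x : ℂ)}] x) := by
  refine tendsto_nhdsWithin_iff.2 ⟨continuous_ofReal.continuousWithinAt.tendsto, ?_⟩
  filter_upwards [Ioo_mem_nhdsGT hb] with y hy
  simp only [Set.mem_sdiff, mem_preimage, ofReal_re, mem_Ioo, mem_singleton_iff, ofReal_inj]
  exact ⟨⟨by linarith [hy.1], hy.2⟩, hy.1.ne'⟩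

variable {E : Type*} {s : Set ℂ} {a b x : ℝ}

theorem tendsto_slope_ofReal_nhdsGT [NormedAddCommGroup E] [NormedSpace ℂ E] {F : ℂ → E} {F' : E}
    (hs : re ⁻¹' Ioo a b ⊆ s) (ha : a ≤ x) (hb : x < b) (hF : HasDerivWithinAt F F' s x) :
    Tendsto (fun y : ℝ => ((y : ℂ) - x)⁻¹ • (F y - F x)) (𝓝[>] x) (𝓝 F') :=
  (hasDerivWithinAt_iff_tendsto_slope.1 hF).comp ((tendsto_ofReal_nhdsGT ha hb).mono_right
    (nhdsWithin_mono _ (sdiff_subset_sdiff_left hs)))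

theorem tendsto_ofReal_nhdsGT_of_eqOn [TopologicalSpace E] {F G : ℂ → E}
    (hs : re ⁻¹' Ioo a b ⊆ s) (ha : a ≤ x) (hb : x < b)
    (hF : ContinuousWithinAt F s x) (hG : EqOn G F (re ⁻¹' Ioo a b)) :
    Tendsto (fun y : ℝ => G y) (𝓝[>] x) (𝓝 (F x)) := by
  refine ((hF.tendsto.mono_left (nhdsWithin_mono _ (sdiff_subset.trans hs))).comp
    (tendsto_ofReal_nhdsGT ha hb)).congr' ?_
  filter_upwards [(tendsto_nhdsWithin_iff.1 (tendsto_ofReal_nhdsGT ha hb)).2] with y hy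
  exact (hG hy.1).symm

end Complex

theorem stmt_19_general (hplus : ℝ) (p : ℂ → ℂ) (pL : ℕ → ℂ → ℂ)
    (M : ℕ → ℝ)
    (hpL : ∀ n : ℕ, ∀ z : ℂ, ((0 < z.re ∧ z.re < hplus) ∨ z.re = 0) →
      AnalyticAt ℂ (pL n) z)
    (hbound : ∀ k n : ℕ, ∀ z : ℂ, (0 < z.re ∧ z.re < hplus) →
      ‖iteratedDeriv k (pL n) z‖ ≤ M k)
    (hconv : ∀ z : ℂ, ((0 < z.re ∧ z.re < hplus) ∨ z.re = 0) →
      Filter.Tendsto (fun n => pL n z) Filter.atTop (nhds (p z))) :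
    ∃ q : ℕ → ℝ → ℂ,
      (∀ x : ℝ, 0 ≤ x → x < hplus → q 0 x = p (x : ℂ)) ∧
      (∀ k : ℕ, ∀ x : ℝ, 0 ≤ x → x < hplus →
        Filter.Tendsto (fun y : ℝ => (q k y - q k x) / ((y : ℂ) - (x : ℂ)))
          (nhdsWithin x (Set.Ioi x)) (nhds (q (k + 1) x))) ∧
      ∀ k : ℕ, ∀ h' : ℝ, 0 ≤ h' → h' < hplus →
        Filter.Tendsto (fun n => iteratedDeriv k (pL n) (h' : ℂ))
          Filter.atTop (nhds (q k h')) ∧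
        Filter.Tendsto (fun h : ℝ => iteratedDeriv k p (h : ℂ))
          (nhdsWithin h' (Set.Ioi h')) (nhds (q k h')) := by
  set U : Set ℂ := Complex.re ⁻¹' Ioo 0 hplus
  set R : Set ℂ := Complex.re ⁻¹' Ico 0 hplus
  have hUR : U ⊆ R := preimage_mono Ioo_subset_Ico_self
  have hR : Convex ℝ R := (convex_Ico 0 hplus).linear_preimage Complex.reLm
  have hRU : ∀ z ∈ R, (0 < z.re ∧ z.re < hplus) ∨ z.re = 0 := fun z hz =>
    hz.1.lt_or_eq.imp (fun h => ⟨h, hz.2⟩) Eq.symm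
  have hUo : IsOpen U := isOpen_Ioo.preimage Complex.continuous_re
  have hacc : ∀ z ∈ R, AccPt z (𝓟 U) := fun z hz => Complex.accPt_re_preimage_Ioo hz.1 hz.2
  have hderiv : ∀ n k, ∀ z ∈ R, HasDerivWithinAt (iteratedDeriv k (pL n))
      (iteratedDeriv (k + 1) (pL n) z) R z := fun n k z hz =>
    ((hpL n z (hRU z hz)).hasDerivAt_iteratedDeriv k).hasDerivWithinAt
  have hM : ∀ n k, ∀ z ∈ R, ‖iteratedDeriv k (pL n) z‖ ≤ M k := fun n k z hz =>
    ContinuousWithinAt.closure_le (mem_closure_iff_clusterPt.2 (hacc z hz).clusterPt)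
      ((hpL n z (hRU z hz)).hasDerivAt_iteratedDeriv k).continuousAt.continuousWithinAt.norm
      continuousWithinAt_const fun w hw => hbound k n w hw
  obtain ⟨Q, hQ, hQ'⟩ := exists_tendsto_hasDerivWithinAt_of_tendsto_zero hR
    (fun z hz => (hacc z hz).mono (principal_mono.2 hUR)) hderiv hM
    (fun z hz => ⟨p z, by simpa only [iteratedDeriv_zero] using hconv z (hRU z hz)⟩)
  have hQ0 : ∀ z ∈ R, Q 0 z = p z := fun z hz =>
    tendsto_nhds_unique (by simpa only [iteratedDeriv_zero] using hQ 0 z hz) (hconv z (hRU z hz))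
  have hpQ : ∀ k, EqOn (iteratedDeriv k p) (Q k) U :=
    EqOn.iteratedDeriv_of_hasDerivAt hUo (fun z hz => (hQ0 z (hUR hz)).symm)
      fun k z hz => (hQ' k z (hUR hz)).hasDerivAt (mem_of_superset (hUo.mem_nhds hz) hUR)
  refine ⟨fun k x => Q k x, fun x h0 hx => hQ0 x ⟨h0, hx⟩, fun k x h0 hx => ?_,
    fun k x h0 hx => ⟨hQ k x ⟨h0, hx⟩, Complex.tendsto_ofReal_nhdsGT_of_eqOn hUR h0 hx
      (hQ' k x ⟨h0, hx⟩).continuousWithinAt (hpQ k)⟩⟩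
  simpa only [smul_eq_mul, div_eq_inv_mul] using
    Complex.tendsto_slope_ofReal_nhdsGT hUR h0 hx (hQ' k x ⟨h0, hx⟩)

/-- Suppose `p` restricted to `U₊ ∪ {Re h = 0}`, where
`U₊ = {0 < Re h < h₊}`, is the pointwise limit of functions `p_Λ` analytic at
every point of `U₊ ∪ {Re h = 0}`, whose `k`-th derivatives are bounded on `U₊`
uniformly in `Λ`, for every `k`. Then for real `h' ∈ [0, h₊)` all iterated
one-sided (right) derivatives `p^{(k),←}(h')` exist (as the family `q k`)
and satisfy `p^{(k),←}(h') = lim_Λ p_Λ^{(k)}(h') = lim_{h↘h'} p^{(k)}(h)`. -/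
theorem stmt_19 (hplus : ℝ) (hh : 0 < hplus) (p : ℂ → ℂ) (pL : ℕ → ℂ → ℂ)
    (M : ℕ → ℝ)
    (hpL : ∀ n : ℕ, ∀ z : ℂ, ((0 < z.re ∧ z.re < hplus) ∨ z.re = 0) →
      AnalyticAt ℂ (pL n) z)
    (hbound : ∀ k n : ℕ, ∀ z : ℂ, (0 < z.re ∧ z.re < hplus) →
      ‖iteratedDeriv k (pL n) z‖ ≤ M k)
    (hconv : ∀ z : ℂ, ((0 < z.re ∧ z.re < hplus) ∨ z.re = 0) →
      Filter.Tendsto (fun n => pL n z) Filter.atTop (nhds (p z))) :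
    ∃ q : ℕ → ℝ → ℂ,
      (∀ x : ℝ, 0 ≤ x → x < hplus → q 0 x = p (x : ℂ)) ∧
      (∀ k : ℕ, ∀ x : ℝ, 0 ≤ x → x < hplus →
        Filter.Tendsto (fun y : ℝ => (q k y - q k x) / ((y : ℂ) - (x : ℂ)))
          (nhdsWithin x (Set.Ioi x)) (nhds (q (k + 1) x))) ∧
      ∀ k : ℕ, ∀ h' : ℝ, 0 ≤ h' → h' < hplus →
        Filter.Tendsto (fun n => iteratedDeriv k (pL n) (h' : ℂ))
          Filter.atTop (nhds (q k h')) ∧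
        Filter.Tendsto (fun h : ℝ => iteratedDeriv k p (h : ℂ))
          (nhdsWithin h' (Set.Ioi h')) (nhds (q k h')) :=
  stmt_19_general hplus p pL M hpL hbound hconv
end
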